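/- arXiv:1010.0366 — 5 statements merged into one kernel-verified Lean document; each statement's English description precedes it below -/
import Mathlib

section
/- Let L be a completely distributive DeMorgan algebra and 𝒯 : L^X → L a function. Then 𝒯 is an L-fuzzy topology on X if and only if for each non-zero coprime element a ∈ J(L), the family 𝒯_[a] = {A ∈ L^X : 𝒯(A) ≥ a} is an L-topology on X (i.e., contains ⊥̲ and ⊤̲, and is closed under arbitrary suprema and finite infima). -/
namespace LFuzzy

/-- A (complete) DeMorgan structure on a complete lattice: an order-reversing involution. -/
structure DeMorgan (L : Type*) [CompleteLattice L] where
  compl : L → L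
  compl_antitone : ∀ a b : L, a ≤ b → compl b ≤ compl a
  compl_involutive : ∀ a : L, compl (compl a) = a

variable {L X Y : Type*} [CompleteLattice L]

/-- Pointwise DeMorgan complement of an L-fuzzy subset. -/
def pcompl (c : DeMorgan L) (U : X → L) : X → L := fun x => c.compl (U x)

/-- An L-fuzzy topology on X. -/
def IsTopology (T : (X → L) → L) : Prop :=
  T ⊥ = ⊤ ∧ T ⊤ = ⊤ ∧ (∀ U V : X → L, T U ⊓ T V ≤ T (U ⊓ V)) ∧
    ∀ S : Set (X → L), (⨅ U ∈ S, T U) ≤ T (sSup S)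

/-- r-fuzzy closure operator. -/
def cl (c : DeMorgan L) (T : (X → L) → L) (U : X → L) (r : L) : X → L :=
  sInf {V | U ≤ V ∧ r ≤ T (pcompl c V)}

/-- r-fuzzy interior operator. -/
def intr (T : (X → L) → L) (U : X → L) (r : L) : X → L :=
  sSup {V | V ≤ U ∧ r ≤ T V}

/-- r-fuzzy Semi-Preopen. -/
def SPO (c : DeMorgan L) (T : (X → L) → L) (U : X → L) (r : L) : Prop :=
  U ≤ cl c T (intr T (cl c T U r) r) r

/-- r-fuzzy Semi-Preclosed. -/
def SPC (c : DeMorgan L) (T : (X → L) → L) (U : X → L) (r : L) : Prop :=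
  intr T (cl c T (intr T U r) r) r ≤ U

/-- Semi-Preinterior. -/
def spInt (c : DeMorgan L) (T : (X → L) → L) (V : X → L) (r : L) : X → L :=
  sSup {W | W ≤ V ∧ SPO c T W r}

/-- Semi-Preclosure. -/
def spCl (c : DeMorgan L) (T : (X → L) → L) (V : X → L) (r : L) : X → L :=
  sInf {W | V ≤ W ∧ SPC c T W r}

/-- r-fuzzy θ-closure. -/
def thCl (c : DeMorgan L) (T : (X → L) → L) (U : X → L) (r : L) : X → L :=
  sInf {V | U ≤ intr T V r ∧ r ≤ T (pcompl c V)}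

/-- r-fuzzy θ-interior. -/
def thInt (c : DeMorgan L) (T : (X → L) → L) (U : X → L) (r : L) : X → L :=
  sSup {V | cl c T V r ≤ U ∧ r ≤ T V}

/-- Image L-fuzzy set operator induced by f. -/
def im (f : X → Y) (U : X → L) : Y → L := fun y => ⨆ x, ⨆ _ : f x = y, U x

/-- Preimage L-fuzzy set operator induced by f. -/
def pre (f : X → Y) (V : Y → L) : X → L := fun x => V (f x)

/-- L-fuzzy weakly open function. -/
def WeaklyOpen (c : DeMorgan L) (T₁ : (X → L) → L) (T₂ : (Y → L) → L) (f : X → Y) : Prop :=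
  ∀ (U : X → L) (r : L), r ≠ ⊥ → r ≤ T₁ U →
    im f U ≤ intr T₂ (im f (cl c T₁ U r)) r

/-- L-fuzzy weakly Semi-Preopen function. -/
def WeaklySPOpen (c : DeMorgan L) (T₁ : (X → L) → L) (T₂ : (Y → L) → L) (f : X → Y) : Prop :=
  ∀ (U : X → L) (r : L), r ≠ ⊥ → r ≤ T₁ U →
    im f U ≤ spInt c T₂ (im f (cl c T₁ U r)) r

/-- L-fuzzy weakly Semi-Preclosed function. -/
def WeaklySPClosed (c : DeMorgan L) (T₁ : (X → L) → L) (T₂ : (Y → L) → L) (f : X → Y) : Prop :=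
  ∀ (U : X → L) (r : L), r ≠ ⊥ → r ≤ T₁ (pcompl c U) →
    spCl c T₂ (im f (intr T₁ U r)) r ≤ im f U

/-- L-fuzzy strongly continuous function. -/
def StronglyCont (c : DeMorgan L) (T₁ : (X → L) → L) (f : X → Y) : Prop :=
  ∀ (U : X → L) (r : L), r ≠ ⊥ → im f (cl c T₁ U r) ≤ im f U

/-- Quasi-coincidence of two L-fuzzy subsets. -/
def Quasi (c : DeMorgan L) (A B : X → L) : Prop := ∃ x, ¬ A x ≤ c.compl (B x)

end LFuzzy

open LFuzzy

variable {L X Y : Type*}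

/-- An L-topology on X in the sense of Chang: a subfamily of L^X containing ⊥ and ⊤,
closed under arbitrary suprema and finite infima. -/
def IsLTopology [CompleteLattice L] (τ : Set (X → L)) : Prop :=
  (⊥ : X → L) ∈ τ ∧ (⊤ : X → L) ∈ τ ∧ (∀ S : Set (X → L), S ⊆ τ → sSup S ∈ τ) ∧
    ∀ U ∈ τ, ∀ V ∈ τ, U ⊓ V ∈ τ


/-!
The forward direction holds for every level `a`. For the converse, in a completely distributive
lattice an inequality `b ≤ t` can be tested on coprime elements `p ≤ b`. By Raney's lemma every
element is the join of the elements totally below it, so from `¬ a ≤ b` one gets a sequence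
`a = c 0`, each `c (n + 1)` totally below `c n`, none below `b`. Its upper set is a completely
prime filter avoiding `b`; the join of its complement is a meet-prime element above `b` but not
above `a`, and the order dual turns this into the coprime separation.
-/

section CompletelyPrime

variable {α : Type*} [CompleteLattice α]

lemma sSup_compl_notMem {U : Set α} (hU : ∀ S : Set α, sSup S ∈ U → ∃ s ∈ S, s ∈ U) :
    sSup Uᶜ ∉ U := fun h => by
  obtain ⟨s, hsU, hs⟩ := hU _ h
  exact hsU hs

lemma infPrime_sSup_compl {U : Set α} (hup : IsUpperSet U) (hne : U.Nonempty)
    (hinf : ∀ x ∈ U, ∀ y ∈ U, x ⊓ y ∈ U) (hU : ∀ S : Set α, sSup S ∈ U → ∃ s ∈ S, s ∈ U) :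
    InfPrime (sSup Uᶜ) := by
  have mem_of_not_le : ∀ x, ¬ x ≤ sSup Uᶜ → x ∈ U := fun x hx => by
    by_contra hxU
    exact hx (le_sSup hxU)
  refine ⟨fun hmax => sSup_compl_notMem hU ?_, fun x y hxy => ?_⟩
  · exact hup (hmax le_top) (hup.top_mem.2 hne)
  · by_contra! hxy'
    exact sSup_compl_notMem hU
      (hup hxy (hinf x (mem_of_not_le x hxy'.1) y (mem_of_not_le y hxy'.2)))

end CompletelyPrime

section TotallyBelow

variable {α : Type*} [CompletelyDistribLattice α]

def TotallyBelow (x y : α) : Prop :=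
  ∀ S : Set α, y ≤ sSup S → ∃ s ∈ S, x ≤ s

lemma TotallyBelow.le {x y : α} (h : TotallyBelow x y) : x ≤ y := by
  obtain ⟨s, rfl, hs⟩ := h {y} (sSup_singleton.ge)
  exact hs

/-- Raney's lemma. -/
lemma le_sSup_totallyBelow (a : α) : a ≤ sSup {x | TotallyBelow x a} :=
  calc a ≤ ⨅ S : {S : Set α // a ≤ sSup S}, ⨆ s : S.1, (s : α) :=
        le_iInf fun S => S.2.trans_eq (sSup_eq_iSup' _)
    _ = ⨆ g : ∀ S : {S : Set α // a ≤ sSup S}, S.1, ⨅ S, (g S : α) := iInf_iSup_eq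
    _ ≤ sSup {x | TotallyBelow x a} := iSup_le fun g => le_sSup fun S hS =>
        ⟨g ⟨S, hS⟩, (g ⟨S, hS⟩).2, iInf_le (fun S => (g S : α)) ⟨S, hS⟩⟩

lemma exists_totallyBelow_not_le {a b : α} (h : ¬ a ≤ b) : ∃ x, TotallyBelow x a ∧ ¬ x ≤ b := by
  by_contra! hc
  exact h ((le_sSup_totallyBelow a).trans (sSup_le hc))

lemma exists_seq_totallyBelow_not_le {a b : α} (h : ¬ a ≤ b) :
    ∃ c : ℕ → α, c 0 = a ∧ (∀ n, TotallyBelow (c (n + 1)) (c n)) ∧ ∀ n, ¬ c n ≤ b := by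
  choose f hf hfb using fun x : {x : α // ¬ x ≤ b} => exists_totallyBelow_not_le x.2
  let c : ℕ → {x : α // ¬ x ≤ b} := fun n => Nat.rec ⟨a, h⟩ (fun _ x => ⟨f x, hfb x⟩) n
  exact ⟨fun n => (c n).1, rfl, fun n => hf (c n), fun n => (c n).2⟩

lemma exists_infPrime_ge_of_not_le {a b : α} (h : ¬ a ≤ b) :
    ∃ q, b ≤ q ∧ ¬ a ≤ q ∧ InfPrime q := by
  obtain ⟨c, hc0, hc, hcb⟩ := exists_seq_totallyBelow_not_le h
  have hanti : Antitone c := antitone_nat_of_succ_le fun n => (hc n).le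
  set U : Set α := {z | ∃ n, c n ≤ z}
  have hup : IsUpperSet U := fun _ _ hzz' ⟨n, hn⟩ => ⟨n, hn.trans hzz'⟩
  have hinf : ∀ x ∈ U, ∀ y ∈ U, x ⊓ y ∈ U := fun x ⟨n, hn⟩ y ⟨m, hm⟩ =>
    ⟨max n m, le_inf ((hanti (le_max_left n m)).trans hn) ((hanti (le_max_right n m)).trans hm)⟩
  have hprime : ∀ S : Set α, sSup S ∈ U → ∃ s ∈ S, s ∈ U := fun S ⟨n, hn⟩ => by
    obtain ⟨s, hs, hcs⟩ := hc n S hn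
    exact ⟨s, hs, n + 1, hcs⟩
  have haU : a ∈ U := ⟨0, hc0.le⟩
  refine ⟨sSup Uᶜ, le_sSup fun ⟨n, hn⟩ => hcb n hn, fun haq => ?_,
    infPrime_sSup_compl hup ⟨a, haU⟩ hinf hprime⟩
  exact sSup_compl_notMem hprime (hup haq haU)

lemma exists_supPrime_le_of_not_le {a b : α} (h : ¬ a ≤ b) :
    ∃ p, p ≤ a ∧ ¬ p ≤ b ∧ SupPrime p := by
  obtain ⟨q, hq⟩ := exists_infPrime_ge_of_not_le (a := OrderDual.toDual b) (b := OrderDual.toDual a) h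
  exact ⟨OrderDual.ofDual q, hq.1, hq.2.1, supPrime_ofDual.2 hq.2.2⟩

lemma le_of_forall_supPrime_le {a b : α} (h : ∀ p, SupPrime p → p ≤ a → p ≤ b) : a ≤ b := by
  by_contra hab
  obtain ⟨p, hpa, hpb, hp⟩ := exists_supPrime_le_of_not_le hab
  exact hpb (h p hp hpa)

end TotallyBelow

section LevelSets

variable [CompleteLattice L] {T : (X → L) → L}

lemma LFuzzy.IsTopology.isLTopology_levelSet (hT : IsTopology T) (a : L) :
    IsLTopology {A : X → L | a ≤ T A} := by
  obtain ⟨hbot, htop, hinf, hsSup⟩ := hT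
  refine ⟨le_top.trans_eq hbot.symm, le_top.trans_eq htop.symm, fun S hS => ?_,
    fun U hU V hV => ?_⟩
  · exact (le_iInf₂ (f := fun U _ => T U) fun U hU => hS hU).trans (hsSup S)
  · exact (le_inf hU hV).trans (hinf U V)

lemma LFuzzy.isTopology_of_forall_isLTopology_levelSet {P : L → Prop}
    (hP : ∀ b t : L, (∀ p, P p → p ≤ b → p ≤ t) → b ≤ t)
    (h : ∀ a, P a → IsLTopology {A : X → L | a ≤ T A}) : IsTopology T := by
  refine ⟨top_unique (hP _ _ fun p hp _ => (h p hp).1),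
    top_unique (hP _ _ fun p hp _ => (h p hp).2.1),
    fun U V => hP _ _ fun p hp hpUV => ?_, fun S => hP _ _ fun p hp hpS => ?_⟩
  · exact (h p hp).2.2.2 U (hpUV.trans inf_le_left) V (hpUV.trans inf_le_right)
  · exact (h p hp).2.2.1 S fun U hU => hpS.trans (iInf₂_le U hU)

end LevelSets

theorem stmt4_general [CompletelyDistribLattice L] (T : (X → L) → L) :
    IsTopology T ↔
      ∀ a : L, (a ≠ ⊥ ∧ ∀ b₁ b₂ : L, a ≤ b₁ ⊔ b₂ → a ≤ b₁ ∨ a ≤ b₂) →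
        IsLTopology {A : X → L | a ≤ T A} :=
  ⟨fun hT a _ => hT.isLTopology_levelSet a,
    isTopology_of_forall_isLTopology_levelSet fun _ _ H =>
      le_of_forall_supPrime_le fun p hp => H p ⟨hp.ne_bot, fun _ _ => hp.le_sup.1⟩⟩

theorem stmt4 [CompletelyDistribLattice L] (c : DeMorgan L) (T : (X → L) → L) :
    IsTopology T ↔
      ∀ a : L, (a ≠ ⊥ ∧ ∀ b₁ b₂ : L, a ≤ b₁ ⊔ b₂ → a ≤ b₁ ∨ a ≤ b₂) →
        IsLTopology {A : X → L | a ≤ T A} :=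
  stmt4_general T
end

section
/- Let (X,𝒯) be an L-fuzzy topological space. If 𝒯(U) ≥ r (i.e., U is r-open), then C_𝒯(U,r) = D_𝒯(U,r), where D_𝒯 is the r-fuzzy θ-closure. -/
open LFuzzy

variable {L X Y : Type*}

theorem stmt7 [CompleteLattice L] (c : DeMorgan L) (T : (X → L) → L)
    (hT : IsTopology T) (U : X → L) (r : L) (hr : r ≠ ⊥) (hU : r ≤ T U) :
    cl c T U r = thCl c T U r := by
  unfold cl thCl
  congr 1
  ext V
  constructor
  · rintro ⟨h1, h2⟩
    exact ⟨le_sSup ⟨h1, hU⟩, h2⟩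
  · rintro ⟨h1, h2⟩
    refine ⟨h1.trans ?_, h2⟩
    exact sSup_le fun W hW => hW.1
end

section
/- Let f : (X,𝒯₁) → (Y,𝒯₂) be a map between L-fuzzy topological spaces. Then f is L-fuzzy weakly Semi-Preopen if and only if f_L^→(T_{𝒯₁}(U,r)) ≤ spℐ_{𝒯₂}(f_L^→(U),r) for every U ∈ L^X and r ∈ L∖{⊥}, where T_{𝒯₁}(U,r) = ⋁{V : C_{𝒯₁}(V,r) ≤ U, 𝒯₁(V) ≥ r} is the r-fuzzy θ-interior. -/
open LFuzzy

variable {L X Y : Type*}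

lemma im_mono' {L X Y : Type*} [CompleteLattice L] {f : X → Y} {U V : X → L} (h : U ≤ V) :
    im f U ≤ im f V := fun y => iSup_mono fun x => iSup_mono fun _ => h x

lemma spInt_mono' {L Y : Type*} [CompleteLattice L] (c : DeMorgan L) (T : (Y → L) → L)
    {A B : Y → L} (r : L) (h : A ≤ B) : spInt c T A r ≤ spInt c T B r :=
  sSup_le_sSup fun W hW => ⟨hW.1.trans h, hW.2⟩

theorem stmt9 [CompleteLattice L] (c : DeMorgan L)
    (T₁ : (X → L) → L) (T₂ : (Y → L) → L) (hT₁ : IsTopology T₁) (hT₂ : IsTopology T₂)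
    (f : X → Y) :
    WeaklySPOpen c T₁ T₂ f ↔
      ∀ (U : X → L) (r : L), r ≠ ⊥ →
        im f (thInt c T₁ U r) ≤ spInt c T₂ (im f U) r := by
  constructor
  · intro h U r hr
    intro y
    refine iSup_le fun x => iSup_le fun hxy => ?_
    rw [thInt, sSup_apply]
    refine iSup_le fun ⟨V, hV⟩ => ?_
    have h1 : im f V ≤ spInt c T₂ (im f U) r := by
      refine (h V r hr hV.2).trans (spInt_mono' c T₂ r (im_mono' ?_))
      exact hV.1
    refine le_trans ?_ (h1 y)
    exact le_iSup_of_le x (le_iSup_of_le hxy le_rfl)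
  · intro h U r hr hU
    have h1 : U ≤ thInt c T₁ (cl c T₁ U r) r :=
      le_sSup (s := {V | cl c T₁ V r ≤ cl c T₁ U r ∧ r ≤ T₁ V}) ⟨le_rfl, hU⟩
    exact (im_mono' h1).trans (h _ r hr)
end

section
/- Let f : (X,𝒯₁) → (Y,𝒯₂) be a map between L-fuzzy topological spaces. Then f is L-fuzzy weakly Semi-Preopen if and only if f_L^←(spC_{𝒯₂}(V,r)) ≤ D_{𝒯₁}(f_L^←(V),r) for every V ∈ L^Y and r ∈ L∖{⊥}. -/
open LFuzzy

variable {L X Y : Type*}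

section Aux

variable [CompleteLattice L] (c : DeMorgan L)

lemma aux_pcompl_pcompl (A : X → L) : pcompl c (pcompl c A) = A :=
  funext fun x => c.compl_involutive _

lemma aux_pcompl_le_pcompl {A B : X → L} (h : A ≤ B) : pcompl c B ≤ pcompl c A :=
  fun x => c.compl_antitone _ _ (h x)

lemma aux_pcompl_le_pcompl_iff {A B : X → L} : pcompl c A ≤ pcompl c B ↔ B ≤ A := by
  constructor
  · intro h
    have := aux_pcompl_le_pcompl c h
    rwa [aux_pcompl_pcompl, aux_pcompl_pcompl] at this
  · exact fun h => aux_pcompl_le_pcompl c h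

lemma aux_le_pcompl_comm {A B : X → L} : A ≤ pcompl c B ↔ B ≤ pcompl c A := by
  constructor
  · intro h
    have := aux_pcompl_le_pcompl c h
    rwa [aux_pcompl_pcompl] at this
  · intro h
    have := aux_pcompl_le_pcompl c h
    rwa [aux_pcompl_pcompl] at this

lemma aux_pcompl_sInf (S : Set (X → L)) :
    pcompl c (sInf S) = sSup (pcompl c '' S) := by
  apply le_antisymm
  · rw [← aux_pcompl_pcompl c (sSup (pcompl c '' S)), aux_pcompl_le_pcompl_iff]
    apply le_sInf
    intro A hA
    rw [← aux_pcompl_pcompl c A, aux_pcompl_le_pcompl_iff]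
    exact le_sSup ⟨A, hA, rfl⟩
  · apply sSup_le
    rintro _ ⟨A, hA, rfl⟩
    exact aux_pcompl_le_pcompl c (sInf_le hA)

lemma aux_pcompl_cl (T : (X → L) → L) (A : X → L) (r : L) :
    pcompl c (cl c T A r) = intr T (pcompl c A) r := by
  unfold cl intr
  rw [aux_pcompl_sInf]
  congr 1
  ext B
  constructor
  · rintro ⟨V, ⟨hV1, hV2⟩, rfl⟩
    exact ⟨aux_pcompl_le_pcompl c hV1, hV2⟩
  · rintro ⟨hB1, hB2⟩
    refine ⟨pcompl c B, ⟨(aux_le_pcompl_comm c).mp hB1, ?_⟩, aux_pcompl_pcompl c B⟩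
    rwa [aux_pcompl_pcompl]

lemma aux_pcompl_intr (T : (X → L) → L) (A : X → L) (r : L) :
    pcompl c (intr T A r) = cl c T (pcompl c A) r := by
  have h := aux_pcompl_cl c T (pcompl c A) r
  rw [aux_pcompl_pcompl] at h
  rw [← h, aux_pcompl_pcompl]

lemma aux_SPC_iff_SPO (T : (X → L) → L) (W : X → L) (r : L) :
    SPC c T W r ↔ SPO c T (pcompl c W) r := by
  unfold SPC SPO
  rw [← aux_pcompl_intr, ← aux_pcompl_cl, ← aux_pcompl_intr, aux_pcompl_le_pcompl_iff]

lemma aux_pcompl_spCl (T : (X → L) → L) (V : X → L) (r : L) :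
    pcompl c (spCl c T V r) = spInt c T (pcompl c V) r := by
  unfold spCl spInt
  rw [aux_pcompl_sInf]
  congr 1
  ext B
  constructor
  · rintro ⟨W, ⟨hW1, hW2⟩, rfl⟩
    exact ⟨aux_pcompl_le_pcompl c hW1, (aux_SPC_iff_SPO c T W r).mp hW2⟩
  · rintro ⟨hB1, hB2⟩
    refine ⟨pcompl c B, ⟨(aux_le_pcompl_comm c).mp hB1, ?_⟩, aux_pcompl_pcompl c B⟩
    rw [aux_SPC_iff_SPO, aux_pcompl_pcompl]
    exact hB2

lemma aux_spCl_pcompl (T : (X → L) → L) (V : X → L) (r : L) :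
    spCl c T (pcompl c V) r = pcompl c (spInt c T V r) := by
  have h := aux_pcompl_spCl c T (pcompl c V) r
  rw [aux_pcompl_pcompl] at h
  rw [← h, aux_pcompl_pcompl]

lemma aux_im_le_iff (f : X → Y) (U : X → L) (V : Y → L) :
    im f U ≤ V ↔ U ≤ pre f V := by
  constructor
  · intro h x
    refine le_trans ?_ (h (f x))
    exact le_iSup_of_le x (le_iSup_of_le rfl le_rfl)
  · intro h y
    apply iSup_le; intro x; apply iSup_le; intro hx
    exact hx ▸ h x

lemma aux_im_mono (f : X → Y) {A B : X → L} (h : A ≤ B) : im f A ≤ im f B := by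
  intro y
  apply iSup_le; intro x; apply iSup_le; intro hx
  exact le_trans (h x) (le_iSup_of_le x (le_iSup_of_le hx le_rfl))

lemma aux_spInt_mono (T : (Y → L) → L) {A B : Y → L} (h : A ≤ B) (r : L) :
    spInt c T A r ≤ spInt c T B r :=
  sSup_le_sSup fun W hW => ⟨le_trans hW.1 h, hW.2⟩

end Aux

theorem stmt11 [CompleteLattice L] (c : DeMorgan L)
    (T₁ : (X → L) → L) (T₂ : (Y → L) → L) (hT₁ : IsTopology T₁) (hT₂ : IsTopology T₂)
    (f : X → Y) :
    WeaklySPOpen c T₁ T₂ f ↔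
      ∀ (V : Y → L) (r : L), r ≠ ⊥ →
        pre f (spCl c T₂ V r) ≤ thCl c T₁ (pre f V) r := by
  constructor
  · intro h V r hr
    apply le_sInf
    rintro W ⟨hW1, hW2⟩
    have h1 := h (pcompl c W) r hr hW2
    have h2 : cl c T₁ (pcompl c W) r ≤ pre f (pcompl c V) := by
      have h3 : pcompl c (intr T₁ W r) ≤ pcompl c (pre f V) := aux_pcompl_le_pcompl c hW1
      rw [aux_pcompl_intr] at h3
      exact h3
    have h4 : im f (cl c T₁ (pcompl c W) r) ≤ pcompl c V :=
      le_trans (aux_im_mono f h2) ((aux_im_le_iff f (pre f (pcompl c V)) (pcompl c V)).mpr le_rfl)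
    have h5 : im f (pcompl c W) ≤ spInt c T₂ (pcompl c V) r :=
      le_trans h1 (aux_spInt_mono c T₂ h4 r)
    have h6 : pcompl c W ≤ pre f (spInt c T₂ (pcompl c V) r) := (aux_im_le_iff f _ _).mp h5
    have h7 : pcompl c (pre f (spInt c T₂ (pcompl c V) r)) ≤ W := by
      rw [← aux_pcompl_pcompl c W, aux_pcompl_le_pcompl_iff]
      exact h6
    have h8 : pre f (spCl c T₂ V r) = pcompl c (pre f (spInt c T₂ (pcompl c V) r)) := by
      have : spCl c T₂ V r = pcompl c (spInt c T₂ (pcompl c V) r) := by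
        rw [← aux_spCl_pcompl, aux_pcompl_pcompl]
      rw [this]; rfl
    rw [h8]
    exact h7
  · intro h U r hr hU
    set G := im f (cl c T₁ U r) with hG
    have key := h (pcompl c G) r hr
    have hth : thCl c T₁ (pre f (pcompl c G)) r ≤ pcompl c U := by
      apply sInf_le
      constructor
      · have h1 : cl c T₁ U r ≤ pre f G := (aux_im_le_iff f _ _).mp le_rfl
        have h2 : pcompl c (pre f G) ≤ pcompl c (cl c T₁ U r) := aux_pcompl_le_pcompl c h1
        rw [aux_pcompl_cl] at h2
        exact h2
      · rwa [aux_pcompl_pcompl]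
    have h3 : pre f (spCl c T₂ (pcompl c G) r) ≤ pcompl c U := le_trans key hth
    rw [aux_spCl_pcompl] at h3
    have h4 : pcompl c (pre f (spInt c T₂ G r)) ≤ pcompl c U := h3
    rw [aux_pcompl_le_pcompl_iff] at h4
    exact (aux_im_le_iff f _ _).mpr h4
end

section
/- Let f : (X,𝒯₁) → (Y,𝒯₂) be L-fuzzy weakly Semi-Preopen. Then for every U ∈ L^X with 𝒯₁(U') ≥ r (U is r-closed), f_L^→(ℐ_{𝒯₁}(U,r)) ≤ spℐ_{𝒯₂}(f_L^→(U),r). -/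
open LFuzzy

variable {L X Y : Type*}

theorem stmt12 [CompleteLattice L] (c : DeMorgan L)
    (T₁ : (X → L) → L) (T₂ : (Y → L) → L) (hT₁ : IsTopology T₁) (hT₂ : IsTopology T₂)
    (f : X → Y) (h : WeaklySPOpen c T₁ T₂ f)
    (U : X → L) (r : L) (hr : r ≠ ⊥) (hU : r ≤ T₁ (pcompl c U)) :
    im f (intr T₁ U r) ≤ spInt c T₂ (im f U) r := by
  have hopen : r ≤ T₁ (intr T₁ U r) := by
    refine le_trans ?_ (hT₁.2.2.2 {V | V ≤ U ∧ r ≤ T₁ V})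
    exact le_iInf fun V => le_iInf fun hV => hV.2
  have hcl : cl c T₁ (intr T₁ U r) r ≤ U := by
    apply sInf_le
    exact ⟨sSup_le fun V hV => hV.1, hU⟩
  have him : im f (cl c T₁ (intr T₁ U r) r) ≤ im f U := by
    intro y
    exact iSup_mono fun x => iSup_mono fun _ => hcl x
  have hsp : spInt c T₂ (im f (cl c T₁ (intr T₁ U r) r)) r ≤ spInt c T₂ (im f U) r :=
    sSup_le_sSup fun W hW => ⟨le_trans hW.1 him, hW.2⟩
  exact le_trans (h (intr T₁ U r) r hr hopen) hsp
end
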